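/- arXiv:1209.4161 — 2 statements merged into one kernel-verified Lean document; each statement's English description precedes it below -/
import Mathlib

section
/- (Hardy inequality.) For every dimension n ≥ 1, every κ > 1, and every 1 < p < ∞ there is a constant C = C(n, κ, p) such that for every cube Q ⊂ ℝⁿ and all measurable functions g₁ ∈ L^p(ℝⁿ), g₂ ∈ L^{p'}(ℝⁿ), one has ∫_{κQ ∖ Q} ∫_Q |g₁(y)| |g₂(x)| / |x−y|^n dy dx ≤ C ‖g₁‖_{L^p} ‖g₂‖_{L^{p'}}, where 1/p + 1/p' = 1. -/
open MeasureTheory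
open scoped ENNReal NNReal

noncomputable section

/-- An axis-parallel cube in `ℝⁿ`, given by its lower corner and (positive) side length. -/
structure Cube (n : ℕ) where
  c : Fin n → ℝ
  l : ℝ
  l_pos : 0 < l

/-- The set of points of a cube. -/
def Cube.set {n : ℕ} (Q : Cube n) : Set (Fin n → ℝ) :=
  Set.Icc Q.c (fun i => Q.c i + Q.l)

/-- The concentric dilate `κQ` of a cube `Q`: same center, side length `κ · ℓQ`. -/
def Cube.dilate {n : ℕ} (Q : Cube n) (κ : ℝ) : Set (Fin n → ℝ) :=
  Set.Icc (fun i => Q.c i - (κ - 1) * Q.l / 2) (fun i => Q.c i + Q.l + (κ - 1) * Q.l / 2)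

section HardyAux

open Metric Set

lemma hardy_exists_dyadic_le (x : ℝ) (hx : 1 ≤ x) : ∃ k : ℕ, 2^k ≤ x ∧ x < 2^(k+1) := by
  obtain ⟨m, hm⟩ := pow_unbounded_of_one_lt x (one_lt_two (α := ℝ))
  induction m with
  | zero => simp at hm; linarith
  | succ m ih =>
    by_cases h : x < 2 ^ m
    · exact ih h
    · exact ⟨m, le_of_not_gt h, hm⟩

lemma hardy_exists_dyadic_lt (x : ℝ) (hx : 1 < x) : ∃ k : ℕ, 2^k < x ∧ x ≤ 2^(k+1) := by
  obtain ⟨m, hm⟩ := pow_unbounded_of_one_lt x (one_lt_two (α := ℝ))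
  replace hm : x ≤ 2 ^ m := hm.le
  induction m with
  | zero => simp at hm; linarith
  | succ m ih =>
    by_cases h : x ≤ 2 ^ m
    · exact ih h
    · exact ⟨m, lt_of_not_ge h, hm⟩

lemma hardy_core_lemma {X : Type*} [MeasurableSpace X] (μ : Measure X) (E : Set X)
    (hE : MeasurableSet E) (f : X → ℝ) (hf : Measurable f)
    (e B r : ℝ) (he0 : 0 < e) (he1 : e < 1) (hr : 0 < r) (hB : 0 ≤ B)
    (hEf : ∀ z ∈ E, 0 < f z ∧ f z < r)
    (hV : ∀ s : ℝ, 0 < s → μ (E ∩ {z | f z < s}) ≤ ENNReal.ofReal (B * s)) :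
    ∫⁻ z in E, ENNReal.ofReal (f z ^ (-e)) ∂μ ≤
      ENNReal.ofReal (2 ^ e * B * r ^ (1 - e)) * (1 - ENNReal.ofReal (2 ^ (e - 1)))⁻¹ := by
  set Ej : ℕ → Set X := fun j => E ∩ {z | r ≤ 2 ^ (j+1) * f z ∧ 2 ^ j * f z < r} with hEj
  have hcover : E ⊆ ⋃ j, Ej j := by
    intro z hz
    obtain ⟨h0, h1⟩ := hEf z hz
    obtain ⟨k, hk1, hk2⟩ := hardy_exists_dyadic_lt (r / f z) ((one_lt_div h0).mpr h1)
    refine Set.mem_iUnion.mpr ⟨k, hz, ?_, ?_⟩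
    · rw [div_le_iff₀ h0] at hk2; linarith [hk2]
    · rw [lt_div_iff₀ h0] at hk1; linarith [hk1]
  have step1 : ∫⁻ z in E, ENNReal.ofReal (f z ^ (-e)) ∂μ ≤
      ∑' j, ∫⁻ z in Ej j, ENNReal.ofReal (f z ^ (-e)) ∂μ :=
    le_trans (lintegral_mono_set hcover) (lintegral_iUnion_le _ _)
  have hEjm : ∀ j, MeasurableSet (Ej j) := by
    intro j
    refine hE.inter ?_
    have h1 : MeasurableSet {z | r ≤ 2 ^ (j+1) * f z} :=
      measurableSet_le measurable_const (hf.const_mul _)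
    have h2 : MeasurableSet {z | 2 ^ j * f z < r} :=
      measurableSet_lt (hf.const_mul _) measurable_const
    exact h1.inter h2
  have step2 : ∀ j, ∫⁻ z in Ej j, ENNReal.ofReal (f z ^ (-e)) ∂μ ≤
      ENNReal.ofReal ((r / 2 ^ (j+1)) ^ (-e)) * ENNReal.ofReal (B * (r / 2 ^ j)) := by
    intro j
    have hb : ∫⁻ z in Ej j, ENNReal.ofReal (f z ^ (-e)) ∂μ ≤
        ∫⁻ _ in Ej j, ENNReal.ofReal ((r / 2 ^ (j+1)) ^ (-e)) ∂μ := by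
      refine setLIntegral_mono' (hEjm j) ?_
      intro z hz
      obtain ⟨hzE, hz1, hz2⟩ := hz
      refine ENNReal.ofReal_le_ofReal ?_
      refine Real.rpow_le_rpow_of_nonpos (by positivity) ?_ (by linarith)
      rw [div_le_iff₀ (by positivity)]
      linarith [hz1]
    rw [setLIntegral_const] at hb
    refine hb.trans (mul_le_mul_right ?_ _)
    refine (measure_mono ?_).trans (hV (r / 2 ^ j) (by positivity))
    rintro z ⟨hzE, _, hz2⟩
    exact ⟨hzE, by rw [Set.mem_setOf_eq, lt_div_iff₀ (by positivity : (0:ℝ) < 2 ^ j)]; linarith⟩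
  have key : ∀ j : ℕ, (r / 2 ^ (j+1)) ^ (-e) * (B * (r / 2 ^ j)) =
      (2 ^ e * B * r ^ (1 - e)) * ((2:ℝ) ^ (e - 1)) ^ j := by
    intro j
    have h2 : (0:ℝ) < 2 := two_pos
    have hpj : (0:ℝ) < 2 ^ j := by positivity
    have hpj1 : (0:ℝ) < 2 ^ (j+1) := by positivity
    have l1 : Real.log (r / 2^(j+1)) = Real.log r - ((j:ℝ)+1) * Real.log 2 := by
      rw [Real.log_div hr.ne' hpj1.ne', Real.log_pow]; push_cast; ring
    have l2 : Real.log (r / 2^j) = Real.log r - (j:ℝ) * Real.log 2 := by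
      rw [Real.log_div hr.ne' hpj.ne', Real.log_pow]
    have main : (r / 2 ^ (j+1)) ^ (-e) * (r / 2 ^ j) =
        2 ^ e * r ^ (1 - e) * ((2:ℝ) ^ (e - 1)) ^ j := by
      rw [Real.rpow_def_of_pos (by positivity : (0:ℝ) < r / 2^(j+1)),
        Real.rpow_def_of_pos h2 e, Real.rpow_def_of_pos hr (1-e),
        Real.rpow_def_of_pos h2 (e-1), ← Real.exp_nat_mul,
        ← Real.exp_log (by positivity : (0:ℝ) < r / 2^j),
        ← Real.exp_add, ← Real.exp_add, ← Real.exp_add, Real.exp_eq_exp, l1, l2]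
      ring
    calc (r / 2 ^ (j+1)) ^ (-e) * (B * (r / 2 ^ j))
        = B * ((r / 2 ^ (j+1)) ^ (-e) * (r / 2 ^ j)) := by ring
      _ = B * (2 ^ e * r ^ (1 - e) * ((2:ℝ) ^ (e - 1)) ^ j) := by rw [main]
      _ = (2 ^ e * B * r ^ (1 - e)) * ((2:ℝ) ^ (e - 1)) ^ j := by ring
  refine step1.trans ?_
  have step3 : ∀ j : ℕ, ∫⁻ z in Ej j, ENNReal.ofReal (f z ^ (-e)) ∂μ ≤
      ENNReal.ofReal (2 ^ e * B * r ^ (1 - e)) * (ENNReal.ofReal ((2:ℝ) ^ (e - 1))) ^ j := by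
    intro j
    refine (step2 j).trans_eq ?_
    rw [← ENNReal.ofReal_mul (by positivity), key j, ENNReal.ofReal_mul (by positivity),
      ENNReal.ofReal_pow (by positivity)]
  calc ∑' j, ∫⁻ z in Ej j, ENNReal.ofReal (f z ^ (-e)) ∂μ
      ≤ ∑' j : ℕ, ENNReal.ofReal (2 ^ e * B * r ^ (1 - e)) * (ENNReal.ofReal ((2:ℝ) ^ (e - 1))) ^ j :=
        ENNReal.tsum_le_tsum step3
    _ = ENNReal.ofReal (2 ^ e * B * r ^ (1 - e)) * (1 - ENNReal.ofReal ((2:ℝ) ^ (e - 1)))⁻¹ := by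
        rw [ENNReal.tsum_mul_left, ENNReal.tsum_geometric]

/-- The constant in the dyadic-shell estimate. -/
def hardyCAB (nn e B : ℝ) : ℝ≥0∞ :=
  ENNReal.ofReal (B * 2 ^ nn) * (1 - ENNReal.ofReal ((2:ℝ) ^ (e - 1)))⁻¹ *
    (1 - ENNReal.ofReal ((2:ℝ) ^ (-e)))⁻¹

lemma hardyCAB_ne_top (nn e B : ℝ) (he0 : 0 < e) (he1 : e < 1) : hardyCAB nn e B ≠ ∞ := by
  have h1 : ENNReal.ofReal ((2:ℝ) ^ (e - 1)) < 1 := by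
    rw [← ENNReal.ofReal_one]
    exact ENNReal.ofReal_lt_ofReal_iff_of_nonneg (by positivity) |>.mpr
      (Real.rpow_lt_one_of_one_lt_of_neg one_lt_two (by linarith))
  have h2 : ENNReal.ofReal ((2:ℝ) ^ (-e)) < 1 := by
    rw [← ENNReal.ofReal_one]
    exact ENNReal.ofReal_lt_ofReal_iff_of_nonneg (by positivity) |>.mpr
      (Real.rpow_lt_one_of_one_lt_of_neg one_lt_two (by linarith))
  have i1 : (1 - ENNReal.ofReal ((2:ℝ) ^ (e - 1)))⁻¹ ≠ ∞ :=
    ENNReal.inv_ne_top.2 (fun h => absurd (tsub_eq_zero_iff_le.mp h) (not_le.mpr h1))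
  have i2 : (1 - ENNReal.ofReal ((2:ℝ) ^ (-e)))⁻¹ ≠ ∞ :=
    ENNReal.inv_ne_top.2 (fun h => absurd (tsub_eq_zero_iff_le.mp h) (not_le.mpr h2))
  exact ENNReal.mul_ne_top (ENNReal.mul_ne_top ENNReal.ofReal_ne_top i1) i2

lemma hardy_lemma_AB {X : Type*} [MeasurableSpace X] [PseudoMetricSpace X] (μ : Measure X)
    (E : Set X) (hE : MeasurableSet E) (f : X → ℝ) (hf : Measurable f)
    (w : X) (hdm : Measurable fun z => dist w z)
    (nn t e B : ℝ) (hnn : 1 ≤ nn) (ht : 0 < t) (he0 : 0 < e) (he1 : e < 1) (hB : 0 ≤ B)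
    (hEf : ∀ z ∈ E, 0 < f z ∧ f z ≤ dist w z ∧ t ≤ dist w z)
    (hV : ∀ s r : ℝ, 0 < s → 0 < r →
      μ (E ∩ {z | f z < s} ∩ {z | dist w z < r}) ≤ ENNReal.ofReal (B * s * r ^ (nn - 1))) :
    ∫⁻ z in E, ENNReal.ofReal (f z ^ (-e) * dist w z ^ (-nn)) ∂μ ≤
      hardyCAB nn e B * ENNReal.ofReal (t ^ (-e)) := by
  set S : ℕ → Set X := fun k =>
    E ∩ {z | 2 ^ k * t ≤ dist w z} ∩ {z | dist w z < 2 ^ (k+1) * t} with hS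
  have hSm : ∀ k, MeasurableSet (S k) :=
    fun k => (hE.inter (measurableSet_le measurable_const hdm)).inter
      (measurableSet_lt hdm measurable_const)
  have hcover : E ⊆ ⋃ k, S k := by
    intro z hz
    obtain ⟨h0, h1, h2⟩ := hEf z hz
    obtain ⟨k, hk1, hk2⟩ := hardy_exists_dyadic_le (dist w z / t) ((one_le_div ht).mpr h2)
    rw [le_div_iff₀ ht] at hk1
    rw [div_lt_iff₀ ht] at hk2
    exact Set.mem_iUnion.mpr ⟨k, ⟨hz, hk1⟩, hk2⟩
  have step1 := le_trans
    (lintegral_mono_set (μ := μ) (f := fun z => ENNReal.ofReal (f z ^ (-e) * dist w z ^ (-nn))) hcover)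
    (lintegral_iUnion_le _ _)
  refine step1.trans ?_
  have termk : ∀ k : ℕ, ∫⁻ z in S k, ENNReal.ofReal (f z ^ (-e) * dist w z ^ (-nn)) ∂μ ≤
      (ENNReal.ofReal (B * 2 ^ nn) * (1 - ENNReal.ofReal ((2:ℝ) ^ (e - 1)))⁻¹ *
        ENNReal.ofReal (t ^ (-e))) * (ENNReal.ofReal ((2:ℝ) ^ (-e))) ^ k := by
    intro k
    have hrk : (0:ℝ) < 2 ^ (k+1) * t := by positivity
    have hlow : (0:ℝ) < 2 ^ k * t := by positivity
    have pw : ∀ z ∈ S k, ENNReal.ofReal (f z ^ (-e) * dist w z ^ (-nn)) ≤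
        ENNReal.ofReal ((2 ^ k * t) ^ (-nn)) * ENNReal.ofReal (f z ^ (-e)) := by
      rintro z ⟨⟨hzE, hz1⟩, hz2⟩
      rw [← ENNReal.ofReal_mul (by positivity)]
      refine ENNReal.ofReal_le_ofReal ?_
      rw [mul_comm ((2 ^ k * t) ^ (-nn))]
      refine mul_le_mul_of_nonneg_left ?_ (Real.rpow_nonneg (hEf z hzE).1.le _)
      exact Real.rpow_le_rpow_of_nonpos hlow hz1 (by linarith)
    have hb1 : ∫⁻ z in S k, ENNReal.ofReal (f z ^ (-e) * dist w z ^ (-nn)) ∂μ ≤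
        ENNReal.ofReal ((2 ^ k * t) ^ (-nn)) * ∫⁻ z in S k, ENNReal.ofReal (f z ^ (-e)) ∂μ := by
      rw [← lintegral_const_mul' _ _ ENNReal.ofReal_ne_top]
      exact setLIntegral_mono' (hSm k) pw
    have hcore := hardy_core_lemma μ (S k) (hSm k) f hf e (B * (2 ^ (k+1) * t) ^ (nn - 1))
      (2 ^ (k+1) * t) he0 he1 hrk (by positivity)
      (fun z hz => ⟨(hEf z hz.1.1).1, lt_of_le_of_lt (hEf z hz.1.1).2.1 hz.2⟩)
      (fun s hs => by
        refine (measure_mono ?_).trans ((hV s (2 ^ (k+1) * t) hs hrk).trans_eq ?_)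
        · rintro z ⟨⟨⟨hzE, _⟩, hz2⟩, hzf⟩
          exact ⟨⟨hzE, hzf⟩, hz2⟩
        · ring_nf)
    refine hb1.trans ?_
    refine le_trans (mul_le_mul_right hcore _) ?_
    rw [← mul_assoc, ← ENNReal.ofReal_mul (by positivity)]
    have main : (2 ^ k * t) ^ (-nn) * (2 ^ e * (B * (2 ^ (k+1) * t) ^ (nn - 1)) *
        (2 ^ (k+1) * t) ^ (1 - e)) = (B * 2 ^ nn * t ^ (-e)) * ((2:ℝ) ^ (-e)) ^ k := by
      have aux : (2 ^ k * t) ^ (-nn) * (2 ^ e * (2 ^ (k+1) * t) ^ (nn - 1) *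
          (2 ^ (k+1) * t) ^ (1 - e)) = (2 ^ nn * t ^ (-e)) * ((2:ℝ) ^ (-e)) ^ k := by
        have h2 : (0:ℝ) < 2 := two_pos
        have lk : Real.log (2 ^ k * t) = (k:ℝ) * Real.log 2 + Real.log t := by
          rw [Real.log_mul (by positivity) ht.ne', Real.log_pow]
        have lk1 : Real.log (2 ^ (k+1) * t) = ((k:ℝ)+1) * Real.log 2 + Real.log t := by
          rw [Real.log_mul (by positivity) ht.ne', Real.log_pow]; push_cast; ring
        rw [Real.rpow_def_of_pos hlow, Real.rpow_def_of_pos hrk, Real.rpow_def_of_pos hrk,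
          Real.rpow_def_of_pos h2 e, Real.rpow_def_of_pos h2 nn, Real.rpow_def_of_pos ht (-e),
          Real.rpow_def_of_pos h2 (-e), ← Real.exp_nat_mul,
          ← Real.exp_add, ← Real.exp_add, ← Real.exp_add, ← Real.exp_add, ← Real.exp_add,
          Real.exp_eq_exp, lk, lk1]
        ring
      calc (2 ^ k * t) ^ (-nn) * (2 ^ e * (B * (2 ^ (k+1) * t) ^ (nn - 1)) *
          (2 ^ (k+1) * t) ^ (1 - e))
          = B * ((2 ^ k * t) ^ (-nn) * (2 ^ e * (2 ^ (k+1) * t) ^ (nn - 1) *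
            (2 ^ (k+1) * t) ^ (1 - e))) := by ring
        _ = B * ((2 ^ nn * t ^ (-e)) * ((2:ℝ) ^ (-e)) ^ k) := by rw [aux]
        _ = (B * 2 ^ nn * t ^ (-e)) * ((2:ℝ) ^ (-e)) ^ k := by ring
    rw [main, ENNReal.ofReal_mul (by positivity), ENNReal.ofReal_pow (by positivity),
      ENNReal.ofReal_mul (by positivity)]
    ring_nf
    exact le_refl _
  calc ∑' k, ∫⁻ z in S k, ENNReal.ofReal (f z ^ (-e) * dist w z ^ (-nn)) ∂μ
      ≤ ∑' k : ℕ, (ENNReal.ofReal (B * 2 ^ nn) * (1 - ENNReal.ofReal ((2:ℝ) ^ (e - 1)))⁻¹ *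
          ENNReal.ofReal (t ^ (-e))) * (ENNReal.ofReal ((2:ℝ) ^ (-e))) ^ k :=
        ENNReal.tsum_le_tsum termk
    _ = hardyCAB nn e B * ENNReal.ofReal (t ^ (-e)) := by
        rw [ENNReal.tsum_mul_left, ENNReal.tsum_geometric, hardyCAB]
        ring

/-- The open interior box of a cube. -/
def Cube.inter' {n : ℕ} (Q : Cube n) : Set (Fin n → ℝ) :=
  Set.pi Set.univ (fun i => Set.Ioo (Q.c i) (Q.c i + Q.l))

variable {n : ℕ} (Q : Cube n)

lemma Cube.set_nonempty : Q.set.Nonempty :=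
  ⟨Q.c, by constructor <;> intro i <;> simp [Q.l_pos.le]⟩

lemma Cube.compl_nonempty (hn : 1 ≤ n) : Q.setᶜ.Nonempty := by
  refine ⟨fun j => Q.c j + Q.l + 1, fun h => ?_⟩
  have := h.2 ⟨0, hn⟩
  simp at this
  linarith

lemma Cube.inter'_subset : Q.inter' ⊆ Q.set := by
  intro y hy
  constructor <;> intro i
  · exact (hy i (Set.mem_univ i)).1.le
  · exact (hy i (Set.mem_univ i)).2.le

lemma hardy_le_infDist' {X : Type*} [PseudoMetricSpace X] {s : Set X} {x : X} {t : ℝ}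
    (hs : s.Nonempty) (h : ∀ z ∈ s, t ≤ dist x z) : t ≤ infDist x s := by
  by_contra hc
  obtain ⟨z, hz, hdz⟩ := (infDist_lt_iff hs).mp (lt_of_not_ge hc)
  exact absurd (h z hz) (not_le.mpr hdz)

lemma hardy_pi_slab_vol (i : Fin n) (A : Set ℝ) (a : ℝ) (hAa : volume A ≤ ENNReal.ofReal a)
    (y : Fin n → ℝ) (r : ℝ) :
    volume (Set.pi Set.univ (fun j => if j = i then A else Set.Icc (y j - r) (y j + r)))
      ≤ ENNReal.ofReal a * ENNReal.ofReal (2*r) ^ (n-1) := by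
  rw [volume_pi_pi]
  rw [← Finset.mul_prod_erase Finset.univ _ (Finset.mem_univ i)]
  simp only [if_pos rfl]
  have h2 : ∀ j ∈ Finset.univ.erase i,
      volume (if j = i then A else Set.Icc (y j - r) (y j + r)) = ENNReal.ofReal (2*r) := by
    intro j hj
    rw [if_neg (Finset.mem_erase.mp hj).1, Real.volume_Icc]
    congr 1
    ring
  rw [Finset.prod_congr rfl h2, Finset.prod_const, Finset.card_erase_of_mem (Finset.mem_univ i),
    Finset.card_fin]
  exact mul_le_mul_left hAa _

lemma hardy_slab_sum (hn : 1 ≤ n) (s r : ℝ) (hs : 0 < s) (hr : 0 < r)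
    (T : Fin n → Bool → Set (Fin n → ℝ))
    (hT : ∀ i b, volume (T i b) ≤ ENNReal.ofReal s * ENNReal.ofReal (2*r) ^ (n-1)) :
    volume (⋃ i : Fin n, (T i true ∪ T i false)) ≤
      ENNReal.ofReal ((n * 2^n) * s * r ^ ((n:ℝ) - 1)) := by
  refine (measure_iUnion_le _).trans ?_
  have hone : ∀ i : Fin n, volume (T i true ∪ T i false) ≤
      ENNReal.ofReal (2*s) * ENNReal.ofReal (2*r) ^ (n-1) := by
    intro i
    refine (measure_union_le _ _).trans ?_
    calc volume (T i true) + volume (T i false)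
        ≤ ENNReal.ofReal s * ENNReal.ofReal (2*r) ^ (n-1)
          + ENNReal.ofReal s * ENNReal.ofReal (2*r) ^ (n-1) := add_le_add (hT i true) (hT i false)
      _ = ENNReal.ofReal (2*s) * ENNReal.ofReal (2*r) ^ (n-1) := by
          rw [← two_mul, ← mul_assoc]
          congr 1
          rw [ENNReal.ofReal_mul (by norm_num : (0:ℝ) ≤ 2), ENNReal.ofReal_ofNat]
  refine (ENNReal.tsum_le_tsum hone).trans ?_
  rw [tsum_fintype]
  rw [Finset.sum_const, Finset.card_fin, nsmul_eq_mul]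
  have hpw : ENNReal.ofReal (2*r) ^ (n-1) = ENNReal.ofReal ((2*r) ^ (n-1)) :=
    (ENNReal.ofReal_pow (by linarith) _).symm
  rw [hpw, ← ENNReal.ofReal_natCast n, ← ENNReal.ofReal_mul (by positivity),
    ← ENNReal.ofReal_mul (by positivity)]
  apply ENNReal.ofReal_le_ofReal
  refine le_of_eq ?_
  have hrw : (2*r) ^ (n-1) = 2^(n-1) * r^(n-1) := mul_pow 2 r (n-1)
  have hrw2 : r ^ (n-1) = r ^ ((n:ℝ) - 1) := by
    rw [← Real.rpow_natCast r (n-1)]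
    congr 1
    rw [Nat.cast_sub hn, Nat.cast_one]
  have h2n : (2:ℝ)^(n-1) * 2 = 2^n := by
    rw [← pow_succ, Nat.sub_add_cancel hn]
  calc (n:ℝ) * (2 * s * (2*r)^(n-1)) = (n:ℝ) * (2^(n-1) * 2) * s * r^(n-1) := by
        rw [hrw]; ring
    _ = (n:ℝ) * 2^n * s * r ^ ((n:ℝ)-1) := by rw [h2n, hrw2]

lemma hardy_slab_vol_outer (hn : 1 ≤ n) (y : Fin n → ℝ) (s r : ℝ) (hs : 0 < s) (hr : 0 < r) :
    volume ({x | x ∉ Q.set ∧ infDist x Q.set < s} ∩ {x | dist y x < r}) ≤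
      ENNReal.ofReal ((n * 2^n) * s * r ^ ((n:ℝ) - 1)) := by
  set T : Fin n → Bool → Set (Fin n → ℝ) := fun i b =>
    Set.pi Set.univ (fun j => if j = i then
        (if b then Set.Ioo (Q.c i - s) (Q.c i) else Set.Ioo (Q.c i + Q.l) (Q.c i + Q.l + s))
      else Set.Icc (y j - r) (y j + r)) with hT
  have hsub : {x | x ∉ Q.set ∧ infDist x Q.set < s} ∩ {x | dist y x < r} ⊆
      ⋃ i : Fin n, (T i true ∪ T i false) := by
    rintro x ⟨⟨hx1, hx2⟩, hx3⟩
    have hxj : ∀ j, x j ∈ Set.Icc (y j - r) (y j + r) := by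
      intro j
      have hd := dist_le_pi_dist y x j
      rw [Real.dist_eq] at hd
      have h := abs_lt.mp (lt_of_le_of_lt hd hx3)
      constructor <;> linarith [h.1, h.2]
    have hx1' : ¬ (Q.c ≤ x ∧ x ≤ fun i => Q.c i + Q.l) := by
      rw [Cube.set, Set.mem_Icc] at hx1; exact hx1
    rw [not_and_or] at hx1'
    rcases hx1' with h | h
    · rw [Pi.le_def, not_forall] at h
      obtain ⟨i, hi⟩ := h
      have hi' : x i < Q.c i := lt_of_not_ge hi
      have hlow : Q.c i - x i ≤ infDist x Q.set := by
        refine hardy_le_infDist' Q.set_nonempty ?_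
        intro z hz
        have h1 : Q.c i ≤ z i := hz.1 i
        have h2 := dist_le_pi_dist x z i
        rw [Real.dist_eq] at h2
        calc Q.c i - x i ≤ z i - x i := by linarith
          _ ≤ |x i - z i| := by rw [abs_sub_comm]; exact le_abs_self _
          _ ≤ dist x z := h2
      refine Set.mem_iUnion.mpr ⟨i, Or.inl ?_⟩
      intro j _
      by_cases hji : j = i
      · subst hji
        simp only [if_pos rfl, if_pos rfl]
        exact ⟨by linarith, hi'⟩
      · simp only [if_neg hji]
        exact hxj j
    · rw [Pi.le_def, not_forall] at h
      obtain ⟨i, hi⟩ := h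
      have hi' : Q.c i + Q.l < x i := lt_of_not_ge hi
      have hlow : x i - (Q.c i + Q.l) ≤ infDist x Q.set := by
        refine hardy_le_infDist' Q.set_nonempty ?_
        intro z hz
        have h1 : z i ≤ Q.c i + Q.l := hz.2 i
        have h2 := dist_le_pi_dist x z i
        rw [Real.dist_eq] at h2
        calc x i - (Q.c i + Q.l) ≤ x i - z i := by linarith
          _ ≤ |x i - z i| := le_abs_self _
          _ ≤ dist x z := h2
      refine Set.mem_iUnion.mpr ⟨i, Or.inr ?_⟩
      intro j _
      by_cases hji : j = i
      · subst hji
        simp only [if_pos rfl, if_neg (Bool.false_ne_true ∘ id)]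
        exact ⟨hi', by linarith⟩
      · simp only [if_neg hji]
        exact hxj j
  refine (measure_mono hsub).trans (hardy_slab_sum hn s r hs hr T ?_)
  intro i b
  cases b
  · refine hardy_pi_slab_vol i _ s ?_ y r
    rw [if_neg Bool.false_ne_true, Real.volume_Ioo]
    apply ENNReal.ofReal_le_ofReal; linarith
  · refine hardy_pi_slab_vol i _ s ?_ y r
    rw [if_pos rfl, Real.volume_Ioo]
    apply ENNReal.ofReal_le_ofReal; linarith

lemma hardy_slab_vol_inner (hn : 1 ≤ n) (x : Fin n → ℝ) (s r : ℝ) (hs : 0 < s) (hr : 0 < r) :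
    volume ({y | y ∈ Q.inter' ∧ infDist y Q.setᶜ < s} ∩ {y | dist x y < r}) ≤
      ENNReal.ofReal ((n * 2^n) * s * r ^ ((n:ℝ) - 1)) := by
  set T : Fin n → Bool → Set (Fin n → ℝ) := fun i b =>
    Set.pi Set.univ (fun j => if j = i then
        (if b then Set.Ioo (Q.c i) (Q.c i + s) else Set.Ioo (Q.c i + Q.l - s) (Q.c i + Q.l))
      else Set.Icc (x j - r) (x j + r)) with hT
  have hsub : {y | y ∈ Q.inter' ∧ infDist y Q.setᶜ < s} ∩ {y | dist x y < r} ⊆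
      ⋃ i : Fin n, (T i true ∪ T i false) := by
    rintro y ⟨⟨hy1, hy2⟩, hy3⟩
    have hyj : ∀ j, y j ∈ Set.Icc (x j - r) (x j + r) := by
      intro j
      have hd := dist_le_pi_dist x y j
      rw [Real.dist_eq] at hd
      have h := abs_lt.mp (lt_of_le_of_lt hd hy3)
      constructor <;> linarith [h.1, h.2]
    obtain ⟨z, hz, hdz⟩ := (infDist_lt_iff (Q.compl_nonempty hn)).mp hy2
    have hz' : ¬ (Q.c ≤ z ∧ z ≤ fun i => Q.c i + Q.l) := by
      intro h; exact hz (by rw [Cube.set, Set.mem_Icc]; exact h)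
    rw [not_and_or] at hz'
    have hyI : ∀ j, Q.c j < y j ∧ y j < Q.c j + Q.l := by
      intro j
      exact ⟨(hy1 j (Set.mem_univ j)).1, (hy1 j (Set.mem_univ j)).2⟩
    rcases hz' with h | h
    · rw [Pi.le_def, not_forall] at h
      obtain ⟨i, hi⟩ := h
      have hi' : z i < Q.c i := lt_of_not_ge hi
      have hd : y i - z i ≤ dist y z := by
        have h2 := dist_le_pi_dist y z i
        rw [Real.dist_eq] at h2
        exact le_trans (le_abs_self _) h2
      refine Set.mem_iUnion.mpr ⟨i, Or.inl ?_⟩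
      intro j _
      by_cases hji : j = i
      · subst hji
        simp only [if_pos rfl, if_pos rfl]
        exact ⟨(hyI j).1, by linarith [hd, hdz]⟩
      · simp only [if_neg hji]; exact hyj j
    · rw [Pi.le_def, not_forall] at h
      obtain ⟨i, hi⟩ := h
      have hi' : Q.c i + Q.l < z i := lt_of_not_ge hi
      have hd : z i - y i ≤ dist y z := by
        have h2 := dist_le_pi_dist y z i
        rw [Real.dist_eq] at h2
        rw [abs_sub_comm] at h2
        exact le_trans (le_abs_self _) h2
      refine Set.mem_iUnion.mpr ⟨i, Or.inr ?_⟩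
      intro j _
      by_cases hji : j = i
      · subst hji
        simp only [if_pos rfl, if_neg (Bool.false_ne_true ∘ id)]
        exact ⟨by linarith [hd, hdz], (hyI j).2⟩
      · simp only [if_neg hji]; exact hyj j
  refine (measure_mono hsub).trans (hardy_slab_sum hn s r hs hr T ?_)
  intro i b
  cases b
  · refine hardy_pi_slab_vol i _ s ?_ x r
    rw [if_neg Bool.false_ne_true, Real.volume_Ioo]
    apply ENNReal.ofReal_le_ofReal; linarith
  · refine hardy_pi_slab_vol i _ s ?_ x r
    rw [if_pos rfl, Real.volume_Ioo]
    apply ENNReal.ofReal_le_ofReal; linarith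

lemma hardy_weight_key (p q nn : ℝ) (hp : 0 < p) (hq : 0 < q) (hpq1 : 1/p + 1/q = 1)
    (u v w : ℝ) (hu : 0 < u) (hv : 0 < v) (hw : 0 < w) :
    (u ^ (1/q) * v ^ (-(1/q)) * w ^ (-nn)) ^ (1/p) *
      (u ^ (-(1/p)) * v ^ (1/p) * w ^ (-nn)) ^ (1/q) = w ^ (-nn) := by
  rw [Real.rpow_def_of_pos hu, Real.rpow_def_of_pos hv, Real.rpow_def_of_pos hw,
    Real.rpow_def_of_pos hu, Real.rpow_def_of_pos hv,
    ← Real.exp_add, ← Real.exp_add, ← Real.exp_add, ← Real.exp_add,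
    Real.rpow_def_of_pos (Real.exp_pos _), Real.log_exp,
    Real.rpow_def_of_pos (Real.exp_pos _), Real.log_exp,
    ← Real.exp_add, Real.exp_eq_exp]
  linear_combination (Real.log w * (-nn)) * hpq1

end HardyAux

/-- **The Hardy inequality** on the annulus `κQ ∖ Q`. -/
theorem hardy_inequality
    (n : ℕ) (hn : 1 ≤ n) (κ : ℝ) (hκ : 1 < κ) (p : ℝ) (hp : 1 < p) :
    ∃ C : ℝ, 0 < C ∧
      ∀ (Q : Cube n) (g₁ g₂ : (Fin n → ℝ) → ℂ),
        MemLp g₁ (ENNReal.ofReal p) volume →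
        MemLp g₂ (ENNReal.ofReal (p / (p - 1))) volume →
        ∫⁻ x in Q.dilate κ \ Q.set, ∫⁻ y in Q.set,
            ENNReal.ofReal (‖g₁ y‖ * ‖g₂ x‖ / dist x y ^ (n : ℕ)) ∂volume ∂volume
          ≤ ENNReal.ofReal C * eLpNorm g₁ (ENNReal.ofReal p) volume *
              eLpNorm g₂ (ENNReal.ofReal (p / (p - 1))) volume := by
  classical
  set q := p / (p - 1) with hq_def
  have hpq : p.HolderConjugate q := (Real.holderConjugate_iff_eq_conjExponent hp).2 rfl
  have hq1 : 1 < q := hpq.symm.lt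
  have hp0 : 0 < p := hpq.pos
  have hq0 : 0 < q := hpq.symm.pos
  have hpq1 : 1/p + 1/q = 1 := by
    rw [one_div, one_div]; exact hpq.inv_add_inv_eq_one
  have ha0 : 0 < 1/q := by positivity
  have ha1 : 1/q < 1 := by rw [div_lt_one hq0]; exact hq1
  have hb0 : 0 < 1/p := by positivity
  have hb1 : 1/p < 1 := by rw [div_lt_one hp0]; exact hp
  have hn1 : (1:ℝ) ≤ (n:ℝ) := by exact_mod_cast hn
  set B₀ : ℝ := (n:ℝ) * 2^n with hB₀_def
  have hB₀ : 0 ≤ B₀ := by positivity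
  set CA := hardyCAB (n:ℝ) (1/q) B₀ with hCA_def
  set CB := hardyCAB (n:ℝ) (1/p) B₀ with hCB_def
  have hCAtop : CA ≠ ∞ := hardyCAB_ne_top _ _ _ ha0 ha1
  have hCBtop : CB ≠ ∞ := hardyCAB_ne_top _ _ _ hb0 hb1
  set 𝒞 := CA ^ (1/p) * CB ^ (1/q) with h𝒞_def
  have h𝒞top : 𝒞 ≠ ∞ := ENNReal.mul_ne_top
    (ENNReal.rpow_ne_top_of_nonneg (by positivity) hCAtop)
    (ENNReal.rpow_ne_top_of_nonneg (by positivity) hCBtop)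
  refine ⟨𝒞.toReal + 1, by positivity, ?_⟩
  intro Q g₁ g₂ h₁ h₂
  set A' := Q.dilate κ \ Q.set with hA'_def
  have hA'm : MeasurableSet A' := measurableSet_Icc.diff measurableSet_Icc
  set Qo := Q.inter' with hQo_def
  have hQom : MeasurableSet Qo := MeasurableSet.univ_pi (fun i => measurableSet_Ioo)
  -- measurable representatives of the norms
  set m₁ : (Fin n → ℝ) → ℝ := fun y => ‖h₁.1.mk g₁ y‖ with hm₁_def
  set m₂ : (Fin n → ℝ) → ℝ := fun x => ‖h₂.1.mk g₂ x‖ with hm₂_def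
  have hm₁ : Measurable m₁ := h₁.1.stronglyMeasurable_mk.measurable.norm
  have hm₂ : Measurable m₂ := h₂.1.stronglyMeasurable_mk.measurable.norm
  have hm₁nn : ∀ y, 0 ≤ m₁ y := fun y => norm_nonneg _
  have hm₂nn : ∀ x, 0 ≤ m₂ x := fun x => norm_nonneg _
  have hm₁ae : (fun y => ‖g₁ y‖) =ᵐ[volume] m₁ := h₁.1.ae_eq_mk.fun_comp norm
  have hm₂ae : (fun x => ‖g₂ x‖) =ᵐ[volume] m₂ := h₂.1.ae_eq_mk.fun_comp norm
  -- distance functions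
  set dd : (Fin n → ℝ) → ℝ := fun x => Metric.infDist x Q.set with hdd_def
  set de : (Fin n → ℝ) → ℝ := fun y => Metric.infDist y Q.setᶜ with hde_def
  have hddm : Measurable dd := (Metric.continuous_infDist_pt Q.set).measurable
  have hdem : Measurable de := (Metric.continuous_infDist_pt Q.setᶜ).measurable
  have hddpos : ∀ x ∈ A', 0 < dd x := fun x hx =>
    (isClosed_Icc.notMem_iff_infDist_pos Q.set_nonempty).mp hx.2
  have hQoopen : IsOpen Qo := isOpen_set_pi Set.finite_univ (fun i _ => isOpen_Ioo)
  have hcomplsub : Q.setᶜ ⊆ Qoᶜ := Set.compl_subset_compl.mpr Q.inter'_subset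
  have hdepos : ∀ y ∈ Qo, 0 < de y := by
    intro y hy
    have h1 : 0 < Metric.infDist y Qoᶜ := by
      refine (hQoopen.isClosed_compl.notMem_iff_infDist_pos
        ((Q.compl_nonempty hn).mono hcomplsub)).mp ?_
      simp only [Set.mem_compl_iff, not_not]
      exact hy
    exact lt_of_lt_of_le h1
      (Metric.infDist_le_infDist_of_subset hcomplsub (Q.compl_nonempty hn))
  -- replacing the closed cube by the open box in the inner integral
  have hIcc : Set.pi Set.univ (fun i => Set.Icc (Q.c i) (Q.c i + Q.l)) = Q.set :=
    Set.pi_univ_Icc Q.c (fun i => Q.c i + Q.l)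
  have hvol1 : volume Q.set = ENNReal.ofReal Q.l ^ n := by
    rw [← hIcc, volume_pi_pi]
    simp only [Real.volume_Icc, add_sub_cancel_left]
    rw [Finset.prod_const, Finset.card_fin]
  have hvol2 : volume Qo = ENNReal.ofReal Q.l ^ n := by
    rw [hQo_def, Cube.inter', volume_pi_pi]
    simp only [Real.volume_Ioo, add_sub_cancel_left]
    rw [Finset.prod_const, Finset.card_fin]
  have hvoldiff : volume (Q.set \ Qo) = 0 := by
    rw [measure_diff Q.inter'_subset hQom.nullMeasurableSet
      (by rw [hvol2]; exact ENNReal.pow_ne_top ENNReal.ofReal_ne_top), hvol1, hvol2, tsub_self]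
  have hrestr : volume.restrict Q.set = volume.restrict Qo := by
    apply Measure.restrict_congr_set
    rw [MeasureTheory.ae_eq_set]
    constructor
    · exact hvoldiff
    · rw [Set.diff_eq_empty.mpr Q.inter'_subset]; exact measure_empty
  -- the main functions
  set Φ : (Fin n → ℝ) → (Fin n → ℝ) → ℝ≥0∞ := fun x y =>
    ENNReal.ofReal (m₁ y * m₂ x / dist x y ^ (n : ℕ)) with hΦ_def
  set W₁ : (Fin n → ℝ) → (Fin n → ℝ) → ℝ≥0∞ := fun x y =>
    ENNReal.ofReal (m₁ y ^ p * de y ^ (1/q)) *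
      ENNReal.ofReal (dd x ^ (-(1/q)) * dist y x ^ (-(n:ℝ))) with hW₁_def
  set W₂ : (Fin n → ℝ) → (Fin n → ℝ) → ℝ≥0∞ := fun x y =>
    ENNReal.ofReal (m₂ x ^ q * dd x ^ (1/p)) *
      ENNReal.ofReal (de y ^ (-(1/p)) * dist x y ^ (-(n:ℝ))) with hW₂_def
  set μpr := (volume.restrict A').prod (volume.restrict Qo) with hμpr_def
  -- measurability
  have hdistm : Measurable (fun z : (Fin n → ℝ) × (Fin n → ℝ) => dist z.1 z.2) :=
    continuous_dist.measurable
  have hdistm' : Measurable (fun z : (Fin n → ℝ) × (Fin n → ℝ) => dist z.2 z.1) :=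
    (continuous_snd.dist continuous_fst).measurable
  have hmΦ : Measurable (Function.uncurry Φ) := by
    simp only [Function.uncurry_def, hΦ_def]
    exact (((hm₁.comp measurable_snd).mul (hm₂.comp measurable_fst)).div
      (hdistm.pow_const n)).ennreal_ofReal
  have hmW₁ : Measurable (Function.uncurry W₁) := by
    simp only [Function.uncurry_def, hW₁_def]
    refine Measurable.fun_mul ?_ ?_
    · exact (((hm₁.comp measurable_snd).pow measurable_const).mul
        ((hdem.comp measurable_snd).pow measurable_const)).ennreal_ofReal
    · exact (((hddm.comp measurable_fst).pow measurable_const).mul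
        (hdistm'.pow measurable_const)).ennreal_ofReal
  have hmW₂ : Measurable (Function.uncurry W₂) := by
    simp only [Function.uncurry_def, hW₂_def]
    refine Measurable.fun_mul ?_ ?_
    · exact (((hm₂.comp measurable_fst).pow measurable_const).mul
        ((hddm.comp measurable_fst).pow measurable_const)).ennreal_ofReal
    · exact (((hdem.comp measurable_snd).pow measurable_const).mul
        (hdistm.pow measurable_const)).ennreal_ofReal
  have hmF : Measurable (fun z => (Function.uncurry W₁ z) ^ (1/p)) :=
    hmW₁.pow measurable_const
  have hmG : Measurable (fun z => (Function.uncurry W₂ z) ^ (1/q)) :=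
    hmW₂.pow measurable_const
  -- pointwise bound on the product
  have haeprod : ∀ᵐ z ∂μpr, z ∈ A' ×ˢ Qo := by
    rw [hμpr_def, Measure.prod_restrict]
    exact ae_restrict_mem (hA'm.prod hQom)
  have hpoint : ∀ᵐ z ∂μpr, Function.uncurry Φ z ≤
      (Function.uncurry W₁ z) ^ (1/p) * (Function.uncurry W₂ z) ^ (1/q) := by
    filter_upwards [haeprod] with z hz
    obtain ⟨hx, hy⟩ := hz
    have hdx : 0 < dd z.1 := hddpos z.1 hx
    have hdy : 0 < de z.2 := hdepos z.2 hy
    have hwd : 0 < dist z.1 z.2 := by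
      have := Metric.infDist_le_dist_of_mem (x := z.2) (Set.mem_compl hx.2)
      rw [dist_comm] at this
      exact lt_of_lt_of_le hdy this
    refine le_of_eq ?_
    have eW₁ : Function.uncurry W₁ z ^ (1/p) =
        ENNReal.ofReal ((m₁ z.2 ^ p *
          (de z.2 ^ (1/q) * dd z.1 ^ (-(1/q)) * dist z.1 z.2 ^ (-(n:ℝ)))) ^ (1/p)) := by
      simp only [Function.uncurry_def, hW₁_def]
      rw [dist_comm z.2 z.1, ← ENNReal.ofReal_mul (by positivity),
        ENNReal.ofReal_rpow_of_nonneg (by positivity) (by positivity)]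
      congr 2
      ring
    have eW₂ : Function.uncurry W₂ z ^ (1/q) =
        ENNReal.ofReal ((m₂ z.1 ^ q *
          (de z.2 ^ (-(1/p)) * dd z.1 ^ (1/p) * dist z.1 z.2 ^ (-(n:ℝ)))) ^ (1/q)) := by
      simp only [Function.uncurry_def, hW₂_def]
      rw [← ENNReal.ofReal_mul (by positivity),
        ENNReal.ofReal_rpow_of_nonneg (by positivity) (by positivity)]
      congr 2
      ring
    rw [eW₁, eW₂, ← ENNReal.ofReal_mul (by positivity)]
    simp only [Function.uncurry_def, hΦ_def]
    congr 1
    have hs₁ : (m₁ z.2 ^ p *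
        (de z.2 ^ (1/q) * dd z.1 ^ (-(1/q)) * dist z.1 z.2 ^ (-(n:ℝ)))) ^ (1/p) =
        m₁ z.2 * (de z.2 ^ (1/q) * dd z.1 ^ (-(1/q)) * dist z.1 z.2 ^ (-(n:ℝ))) ^ (1/p) := by
      rw [Real.mul_rpow (by positivity) (by positivity), ← Real.rpow_mul (hm₁nn z.2),
        mul_one_div_cancel hp0.ne', Real.rpow_one]
    have hs₂ : (m₂ z.1 ^ q *
        (de z.2 ^ (-(1/p)) * dd z.1 ^ (1/p) * dist z.1 z.2 ^ (-(n:ℝ)))) ^ (1/q) =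
        m₂ z.1 * (de z.2 ^ (-(1/p)) * dd z.1 ^ (1/p) * dist z.1 z.2 ^ (-(n:ℝ))) ^ (1/q) := by
      rw [Real.mul_rpow (by positivity) (by positivity), ← Real.rpow_mul (hm₂nn z.1),
        mul_one_div_cancel hq0.ne', Real.rpow_one]
    rw [hs₁, hs₂]
    rw [div_eq_mul_inv, ← Real.rpow_natCast (dist z.1 z.2) n, ← Real.rpow_neg dist_nonneg]
    calc m₁ z.2 * m₂ z.1 * dist z.1 z.2 ^ (-(n:ℝ))
        = m₁ z.2 * m₂ z.1 * ((de z.2 ^ (1/q) * dd z.1 ^ (-(1/q)) * dist z.1 z.2 ^ (-(n:ℝ))) ^ (1/p) *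
            (de z.2 ^ (-(1/p)) * dd z.1 ^ (1/p) * dist z.1 z.2 ^ (-(n:ℝ))) ^ (1/q)) := by
          rw [hardy_weight_key p q (n:ℝ) hp0 hq0 hpq1 _ _ _ hdy hdx hwd]
      _ = m₁ z.2 * (de z.2 ^ (1/q) * dd z.1 ^ (-(1/q)) * dist z.1 z.2 ^ (-(n:ℝ))) ^ (1/p) *
            (m₂ z.1 * (de z.2 ^ (-(1/p)) * dd z.1 ^ (1/p) * dist z.1 z.2 ^ (-(n:ℝ))) ^ (1/q)) := by
          ring
  -- the inner estimates
  have hint1 : ∫⁻ z, Function.uncurry W₁ z ∂μpr ≤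
      CA * ∫⁻ y, ENNReal.ofReal (m₁ y ^ p) ∂volume := by
    rw [hμpr_def, lintegral_prod _ hmW₁.aemeasurable]
    have hswap := lintegral_lintegral_swap (μ := volume.restrict A') (ν := volume.restrict Qo)
      hmW₁.aemeasurable
    simp only [Function.uncurry_def] at hswap ⊢
    rw [hswap]
    have hin : ∀ y ∈ Qo, ∫⁻ x in A', W₁ x y ∂volume ≤ CA * ENNReal.ofReal (m₁ y ^ p) := by
      intro y hy
      have hdy : 0 < de y := hdepos y hy
      rw [hW₁_def]
      rw [lintegral_const_mul' _ _ ENNReal.ofReal_ne_top]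
      have hEf : ∀ x ∈ A', 0 < dd x ∧ dd x ≤ dist y x ∧ de y ≤ dist y x := by
        intro x hx
        refine ⟨hddpos x hx, ?_, ?_⟩
        · have := Metric.infDist_le_dist_of_mem (x := x) (Q.inter'_subset hy)
          rw [dist_comm] at this
          exact this
        · exact Metric.infDist_le_dist_of_mem (Set.mem_compl hx.2)
      have hV : ∀ s r : ℝ, 0 < s → 0 < r →
          volume (A' ∩ {x | dd x < s} ∩ {x | dist y x < r}) ≤
            ENNReal.ofReal (B₀ * s * r ^ ((n:ℝ) - 1)) := by
        intro s r hs hr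
        refine (measure_mono ?_).trans (hardy_slab_vol_outer Q hn y s r hs hr)
        rintro x ⟨⟨hx1, hx2⟩, hx3⟩
        exact ⟨⟨hx1.2, hx2⟩, hx3⟩
      have hAB := hardy_lemma_AB volume A' hA'm dd hddm y
        ((continuous_const.dist continuous_id).measurable) (n:ℝ) (de y) (1/q) B₀
        hn1 hdy ha0 ha1 hB₀ hEf hV
      refine le_trans (mul_le_mul_right hAB _) ?_
      rw [ENNReal.ofReal_mul (by positivity)]
      have hde1 : ENNReal.ofReal (de y ^ (1/q)) * ENNReal.ofReal (de y ^ (-(1/q))) = 1 := by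
        rw [← ENNReal.ofReal_mul (by positivity), ← Real.rpow_add hdy, add_neg_cancel,
          Real.rpow_zero, ENNReal.ofReal_one]
      calc ENNReal.ofReal (m₁ y ^ p) * ENNReal.ofReal (de y ^ (1/q)) *
            (CA * ENNReal.ofReal (de y ^ (-(1/q))))
          = CA * ENNReal.ofReal (m₁ y ^ p) *
            (ENNReal.ofReal (de y ^ (1/q)) * ENNReal.ofReal (de y ^ (-(1/q)))) := by ring
        _ = CA * ENNReal.ofReal (m₁ y ^ p) := by rw [hde1, mul_one]
        _ ≤ CA * ENNReal.ofReal (m₁ y ^ p) := le_refl _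
    calc ∫⁻ y in Qo, ∫⁻ x in A', W₁ x y ∂volume ∂volume
        ≤ ∫⁻ y in Qo, CA * ENNReal.ofReal (m₁ y ^ p) ∂volume :=
          lintegral_mono_ae ((ae_restrict_iff' hQom).2 (Filter.Eventually.of_forall hin))
      _ = CA * ∫⁻ y in Qo, ENNReal.ofReal (m₁ y ^ p) ∂volume :=
          lintegral_const_mul' _ _ hCAtop
      _ ≤ CA * ∫⁻ y, ENNReal.ofReal (m₁ y ^ p) ∂volume :=
          mul_le_mul_right (setLIntegral_le_lintegral _ _) _
  have hint2 : ∫⁻ z, Function.uncurry W₂ z ∂μpr ≤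
      CB * ∫⁻ x, ENNReal.ofReal (m₂ x ^ q) ∂volume := by
    rw [hμpr_def, lintegral_prod _ hmW₂.aemeasurable]
    simp only [Function.uncurry_def]
    have hin : ∀ x ∈ A', ∫⁻ y in Qo, W₂ x y ∂volume ≤ CB * ENNReal.ofReal (m₂ x ^ q) := by
      intro x hx
      have hdx : 0 < dd x := hddpos x hx
      rw [hW₂_def]
      rw [lintegral_const_mul' _ _ ENNReal.ofReal_ne_top]
      have hEf : ∀ y ∈ Qo, 0 < de y ∧ de y ≤ dist x y ∧ dd x ≤ dist x y := by
        intro y hy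
        refine ⟨hdepos y hy, ?_, ?_⟩
        · have := Metric.infDist_le_dist_of_mem (x := y) (Set.mem_compl hx.2)
          rw [dist_comm] at this
          exact this
        · exact Metric.infDist_le_dist_of_mem (Q.inter'_subset hy)
      have hV : ∀ s r : ℝ, 0 < s → 0 < r →
          volume (Qo ∩ {y | de y < s} ∩ {y | dist x y < r}) ≤
            ENNReal.ofReal (B₀ * s * r ^ ((n:ℝ) - 1)) := by
        intro s r hs hr
        refine (measure_mono ?_).trans (hardy_slab_vol_inner Q hn x s r hs hr)
        rintro y ⟨⟨hy1, hy2⟩, hy3⟩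
        exact ⟨⟨hy1, hy2⟩, hy3⟩
      have hAB := hardy_lemma_AB volume Qo hQom de hdem x
        ((continuous_const.dist continuous_id).measurable) (n:ℝ) (dd x) (1/p) B₀
        hn1 hdx hb0 hb1 hB₀ hEf hV
      refine le_trans (mul_le_mul_right hAB _) ?_
      rw [ENNReal.ofReal_mul (by positivity)]
      have hdd1 : ENNReal.ofReal (dd x ^ (1/p)) * ENNReal.ofReal (dd x ^ (-(1/p))) = 1 := by
        rw [← ENNReal.ofReal_mul (by positivity), ← Real.rpow_add hdx, add_neg_cancel,
          Real.rpow_zero, ENNReal.ofReal_one]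
      calc ENNReal.ofReal (m₂ x ^ q) * ENNReal.ofReal (dd x ^ (1/p)) *
            (CB * ENNReal.ofReal (dd x ^ (-(1/p))))
          = CB * ENNReal.ofReal (m₂ x ^ q) *
            (ENNReal.ofReal (dd x ^ (1/p)) * ENNReal.ofReal (dd x ^ (-(1/p)))) := by ring
        _ = CB * ENNReal.ofReal (m₂ x ^ q) := by rw [hdd1, mul_one]
        _ ≤ CB * ENNReal.ofReal (m₂ x ^ q) := le_refl _
    calc ∫⁻ x in A', ∫⁻ y in Qo, W₂ x y ∂volume ∂volume
        ≤ ∫⁻ x in A', CB * ENNReal.ofReal (m₂ x ^ q) ∂volume :=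
          lintegral_mono_ae ((ae_restrict_iff' hA'm).2 (Filter.Eventually.of_forall hin))
      _ = CB * ∫⁻ x in A', ENNReal.ofReal (m₂ x ^ q) ∂volume :=
          lintegral_const_mul' _ _ hCBtop
      _ ≤ CB * ∫⁻ x, ENNReal.ofReal (m₂ x ^ q) ∂volume :=
          mul_le_mul_right (setLIntegral_le_lintegral _ _) _
  -- identification of the Lp norms
  have hsn₁ : (∫⁻ y, ENNReal.ofReal (m₁ y ^ p) ∂volume) ^ (1/p) =
      eLpNorm g₁ (ENNReal.ofReal p) volume := by
    rw [eLpNorm_congr_ae h₁.1.ae_eq_mk,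
      eLpNorm_eq_lintegral_rpow_enorm_toReal (ENNReal.ofReal_pos.mpr hp0).ne' ENNReal.ofReal_ne_top,
      ENNReal.toReal_ofReal hp0.le]
    congr 1
    apply lintegral_congr
    intro y
    rw [← ofReal_norm, ← ENNReal.ofReal_rpow_of_nonneg (norm_nonneg _) hp0.le]
  have hsn₂ : (∫⁻ x, ENNReal.ofReal (m₂ x ^ q) ∂volume) ^ (1/q) =
      eLpNorm g₂ (ENNReal.ofReal q) volume := by
    rw [eLpNorm_congr_ae h₂.1.ae_eq_mk,
      eLpNorm_eq_lintegral_rpow_enorm_toReal (ENNReal.ofReal_pos.mpr hq0).ne' ENNReal.ofReal_ne_top,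
      ENNReal.toReal_ofReal hq0.le]
    congr 1
    apply lintegral_congr
    intro x
    rw [← ofReal_norm, ← ENNReal.ofReal_rpow_of_nonneg (norm_nonneg _) hq0.le]
  -- Hölder's inequality
  have hH := ENNReal.lintegral_mul_le_Lp_mul_Lq μpr hpq hmF.aemeasurable hmG.aemeasurable
  simp only [Pi.mul_apply] at hH
  have hFp : ∀ z, ((Function.uncurry W₁ z) ^ (1/p)) ^ p = Function.uncurry W₁ z := by
    intro z
    rw [← ENNReal.rpow_mul, one_div_mul_cancel hp0.ne', ENNReal.rpow_one]
  have hGq : ∀ z, ((Function.uncurry W₂ z) ^ (1/q)) ^ q = Function.uncurry W₂ z := by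
    intro z
    rw [← ENNReal.rpow_mul, one_div_mul_cancel hq0.ne', ENNReal.rpow_one]
  rw [lintegral_congr hFp, lintegral_congr hGq] at hH
  -- conversion of the statement's LHS
  have hLHS : ∫⁻ x in A', ∫⁻ y in Q.set,
      ENNReal.ofReal (‖g₁ y‖ * ‖g₂ x‖ / dist x y ^ (n : ℕ)) ∂volume ∂volume
      = ∫⁻ x in A', ∫⁻ y in Qo, Φ x y ∂volume ∂volume := by
    rw [hrestr]
    refine lintegral_congr_ae ?_
    filter_upwards [ae_restrict_of_ae hm₂ae] with x hx
    refine lintegral_congr_ae ?_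
    filter_upwards [ae_restrict_of_ae hm₁ae] with y hy
    simp only [hΦ_def]
    rw [hx, hy]
  -- final calculation
  have h𝒞le : 𝒞 ≤ ENNReal.ofReal (𝒞.toReal + 1) := by
    conv_lhs => rw [← ENNReal.ofReal_toReal h𝒞top]
    exact ENNReal.ofReal_le_ofReal (by linarith [ENNReal.toReal_nonneg (a := 𝒞)])
  calc ∫⁻ x in A', ∫⁻ y in Q.set,
      ENNReal.ofReal (‖g₁ y‖ * ‖g₂ x‖ / dist x y ^ (n : ℕ)) ∂volume ∂volume
      = ∫⁻ z, Function.uncurry Φ z ∂μpr := by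
        rw [hLHS, hμpr_def, lintegral_prod _ hmΦ.aemeasurable]
        rfl
    _ ≤ ∫⁻ z, (Function.uncurry W₁ z) ^ (1/p) * (Function.uncurry W₂ z) ^ (1/q) ∂μpr :=
        lintegral_mono_ae hpoint
    _ ≤ (∫⁻ z, Function.uncurry W₁ z ∂μpr) ^ (1/p) *
          (∫⁻ z, Function.uncurry W₂ z ∂μpr) ^ (1/q) := hH
    _ ≤ (CA * ∫⁻ y, ENNReal.ofReal (m₁ y ^ p) ∂volume) ^ (1/p) *
          (CB * ∫⁻ x, ENNReal.ofReal (m₂ x ^ q) ∂volume) ^ (1/q) :=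
        mul_le_mul' (ENNReal.rpow_le_rpow hint1 (by positivity))
          (ENNReal.rpow_le_rpow hint2 (by positivity))
    _ = 𝒞 * eLpNorm g₁ (ENNReal.ofReal p) volume * eLpNorm g₂ (ENNReal.ofReal q) volume := by
        rw [ENNReal.mul_rpow_of_nonneg _ _ (by positivity : (0:ℝ) ≤ 1/p),
          ENNReal.mul_rpow_of_nonneg _ _ (by positivity : (0:ℝ) ≤ 1/q),
          hsn₁, hsn₂, h𝒞_def]
        ring
    _ ≤ ENNReal.ofReal (𝒞.toReal + 1) * eLpNorm g₁ (ENNReal.ofReal p) volume *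
          eLpNorm g₂ (ENNReal.ofReal q) volume := by
        exact mul_le_mul_left (mul_le_mul_left h𝒞le _) _

end
end

section
/- (Far off-diagonal bilinear kernel estimate.) Let n ≥ 1, η > 0, and let K : ℝⁿ × ℝⁿ → ℂ satisfy the smoothness bound |K(x,y) − K(x',y)| ≤ |x−x'|^η / |x−y|^{n+η} whenever |x−x'| < |x−y|/2 (supremum-norm distances). Let P and Q be cubes in ℝⁿ with side lengths ℓP, ℓQ satisfying ℓQ ≤ ℓP and dist(P, Q) ≥ ℓP. Let φ₁ ∈ L¹(ℝⁿ) be supported in P and φ₂ ∈ L¹(ℝⁿ) be supported in Q with ∫ φ₂ dx = 0. Then | ∫_Q ∫_P K(x,y) φ₁(y) φ₂(x) dy dx | ≤ C(n, η) (ℓQ)^η dist(P, Q)^{−(n+η)} ‖φ₁‖_{L¹} ‖φ₂‖_{L¹}. -/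
open MeasureTheory
open scoped ENNReal NNReal

noncomputable section

/-- The distance between two cubes, `dist(P,Q) = inf { |x−y| : x ∈ P, y ∈ Q }`
(sup-norm distances). -/
def cubeDist {n : ℕ} (P Q : Cube n) : ℝ :=
  sInf {d : ℝ | ∃ x ∈ P.set, ∃ y ∈ Q.set, d = dist x y}

/-- **Far off-diagonal bilinear kernel estimate.** -/
theorem far_offdiagonal_estimate
    (n : ℕ) (hn : 1 ≤ n) (η : ℝ) (hη : 0 < η) :
    ∃ C : ℝ, 0 < C ∧
      ∀ K : (Fin n → ℝ) → (Fin n → ℝ) → ℂ,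
        Measurable (fun p : (Fin n → ℝ) × (Fin n → ℝ) => K p.1 p.2) →
        (∀ x x' y, dist x x' < dist x y / 2 →
          ‖K x y - K x' y‖ ≤ dist x x' ^ η / dist x y ^ ((n : ℝ) + η)) →
      ∀ P Q : Cube n, Q.l ≤ P.l → P.l ≤ cubeDist P Q →
      ∀ φ₁ φ₂ : (Fin n → ℝ) → ℂ,
        Integrable φ₁ volume → Integrable φ₂ volume →
        (∀ y, y ∉ P.set → φ₁ y = 0) →
        (∀ x, x ∉ Q.set → φ₂ x = 0) →
        (∫ x, φ₂ x) = 0 →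
        ‖∫ x in Q.set, ∫ y in P.set, K x y * φ₁ y * φ₂ x ∂volume ∂volume‖
          ≤ C * Q.l ^ η * cubeDist P Q ^ (-((n : ℝ) + η)) *
              (∫ y, ‖φ₁ y‖) * (∫ x, ‖φ₂ x‖) := by
  refine ⟨1, one_pos, ?_⟩
  intro K hKmeas hK P Q hlQP hPD φ₁ φ₂ hφ₁ hφ₂ hsupp₁ hsupp₂ hmean
  have hQl := Q.l_pos
  have hPl := P.l_pos
  set D := cubeDist P Q with hDdef
  have hD : 0 < D := lt_of_lt_of_le hPl hPD
  set x₀ : Fin n → ℝ := fun i => Q.c i + Q.l / 2 with hx₀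
  set M : ℝ := Q.l ^ η * D ^ (-((n : ℝ) + η)) with hMdef
  have hnη : (0:ℝ) ≤ (n : ℝ) + η := by positivity
  have hM0 : 0 ≤ M :=
    mul_nonneg (Real.rpow_nonneg hQl.le _) (Real.rpow_nonneg hD.le _)
  set I₁ : ℝ := ∫ y, ‖φ₁ y‖ with hI₁
  have hI₁0 : 0 ≤ I₁ := integral_nonneg fun y => norm_nonneg _
  -- the open interior box
  set T : Set (Fin n → ℝ) := Set.pi Set.univ (fun i => Set.Ioo (Q.c i) (Q.c i + Q.l)) with hT
  have hQmeas : MeasurableSet Q.set := measurableSet_Icc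
  have hPmeas : MeasurableSet P.set := measurableSet_Icc
  have hTsub : T ⊆ Q.set := by
    intro x hx
    exact ⟨fun i => (hx i trivial).1.le, fun i => (hx i trivial).2.le⟩
  -- a.e. point of Q.set is in T
  have hTae : ∀ᵐ x ∂(volume.restrict Q.set), x ∈ T := by
    have hae : T =ᵐ[volume] Q.set := MeasureTheory.Measure.univ_pi_Ioo_ae_eq_Icc
    have h0 : volume (Q.set \ T) = 0 := (ae_eq_set.1 hae).2
    rw [ae_restrict_iff' hQmeas]
    have h1 : volume {x | ¬ (x ∈ Q.set → x ∈ T)} = 0 := by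
      apply measure_mono_null _ h0
      intro x hx
      simp only [Set.mem_setOf_eq, Classical.not_imp] at hx
      exact ⟨hx.1, hx.2⟩
    exact h1
  -- distance facts
  have hdistD : ∀ x ∈ Q.set, ∀ y ∈ P.set, D ≤ dist x y := by
    intro x hx y hy
    have : dist y x ∈ {d : ℝ | ∃ a ∈ P.set, ∃ b ∈ Q.set, d = dist a b} :=
      ⟨y, hy, x, hx, rfl⟩
    have hbdd : BddBelow {d : ℝ | ∃ a ∈ P.set, ∃ b ∈ Q.set, d = dist a b} :=
      ⟨0, fun d ⟨a, _, b, _, hd⟩ => hd ▸ dist_nonneg⟩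
    calc D ≤ dist y x := csInf_le hbdd this
    _ = dist x y := dist_comm y x
  have hxx₀ : ∀ x ∈ T, dist x x₀ < Q.l / 2 := by
    intro x hx
    rw [dist_pi_lt_iff (by linarith)]
    intro i
    have h := hx i trivial
    rw [Real.dist_eq, abs_lt]
    simp only [hx₀]
    constructor <;> [skip; skip] <;> simp only [Set.mem_Ioo] at h <;> cases h with
    | intro h1 h2 => linarith
  -- the key pointwise kernel bound
  have hbound : ∀ x ∈ T, ∀ y ∈ P.set, ‖K x y - K x₀ y‖ ≤ M := by
    intro x hx y hy
    have hxQ : x ∈ Q.set := hTsub hx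
    have hDxy : D ≤ dist x y := hdistD x hxQ y hy
    have hlt : dist x x₀ < dist x y / 2 := by
      have := hxx₀ x hx; linarith
    calc ‖K x y - K x₀ y‖ ≤ dist x x₀ ^ η / dist x y ^ ((n : ℝ) + η) := hK x x₀ y hlt
    _ ≤ Q.l ^ η / D ^ ((n : ℝ) + η) := by
        apply div_le_div₀ (Real.rpow_nonneg hQl.le _)
          (Real.rpow_le_rpow dist_nonneg (by have := hxx₀ x hx; linarith) hη.le)
          (Real.rpow_pos_of_pos hD _)
          (Real.rpow_le_rpow hD.le hDxy hnη)
    _ = M := by rw [hMdef, Real.rpow_neg hD.le, div_eq_mul_inv]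
  -- measurability of slices
  have hKx : ∀ x, Measurable (K x) := fun x => hKmeas.comp measurable_prodMk_left
  -- integrability of the difference term
  have hΔint : ∀ x ∈ T, Integrable (fun y => (K x y - K x₀ y) * φ₁ y)
      (volume.restrict P.set) := by
    intro x hx
    have hmeas : AEStronglyMeasurable (fun y => (K x y - K x₀ y) * φ₁ y)
        (volume.restrict P.set) :=
      (((hKx x).sub (hKx x₀)).aestronglyMeasurable.mul hφ₁.1).restrict
    refine Integrable.mono' ((hφ₁.norm.const_mul M).restrict) hmeas ?_
    rw [ae_restrict_iff' hPmeas]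
    refine ae_of_all _ fun y hy => ?_
    rw [norm_mul]
    exact mul_le_mul_of_nonneg_right (hbound x hx y hy) (norm_nonneg _)
  -- define F
  set F : (Fin n → ℝ) → ℂ := fun x => ∫ y in P.set, (K x y - K x₀ y) * φ₁ y with hF
  have hFnorm : ∀ x ∈ T, ‖F x‖ ≤ M * I₁ := by
    intro x hx
    calc ‖F x‖ ≤ ∫ y in P.set, ‖(K x y - K x₀ y) * φ₁ y‖ := norm_integral_le_integral_norm _
    _ ≤ ∫ y in P.set, M * ‖φ₁ y‖ := by
        apply integral_mono_ae (hΔint x hx).norm ((hφ₁.norm.const_mul M).restrict)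
        refine (ae_restrict_iff' hPmeas).2 (ae_of_all _ fun y hy => ?_)
        simp only [norm_mul]
        exact mul_le_mul_of_nonneg_right (hbound x hx y hy) (norm_nonneg _)
    _ = M * ∫ y in P.set, ‖φ₁ y‖ := integral_const_mul M _
    _ ≤ M * I₁ := by
        apply mul_le_mul_of_nonneg_left _ hM0
        exact setIntegral_le_integral hφ₁.norm (ae_of_all _ fun y => norm_nonneg _)
  have hFm : AEStronglyMeasurable F (volume.restrict Q.set) := by
    have hjoint : AEStronglyMeasurable
        (fun p : (Fin n → ℝ) × (Fin n → ℝ) => (K p.1 p.2 - K x₀ p.2) * φ₁ p.2)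
        ((volume.restrict Q.set).prod (volume.restrict P.set)) := by
      have h1 : Measurable (fun p : (Fin n → ℝ) × (Fin n → ℝ) => K p.1 p.2 - K x₀ p.2) :=
        hKmeas.sub ((hKx x₀).comp measurable_snd)
      exact h1.aestronglyMeasurable.mul (hφ₁.1.restrict.comp_snd)
    exact hjoint.integral_prod_right'
  -- the main case split
  by_cases hint : Integrable (fun y => K x₀ y * φ₁ y) (volume.restrict P.set)
  · -- integrable case
    set c₀ : ℂ := ∫ y in P.set, K x₀ y * φ₁ y with hc₀
    have hinner : ∀ᵐ x ∂(volume.restrict Q.set),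
        (∫ y in P.set, K x y * φ₁ y * φ₂ x) = φ₂ x * F x + c₀ * φ₂ x := by
      filter_upwards [hTae] with x hx
      have h1 : (fun y => K x y * φ₁ y * φ₂ x)
          = fun y => φ₂ x * ((K x y - K x₀ y) * φ₁ y + K x₀ y * φ₁ y) := by
        funext y; ring
      rw [h1, integral_const_mul, integral_add (hΔint x hx) hint]
      ring
    have h2int : Integrable (fun x => φ₂ x * F x) (volume.restrict Q.set) := by
      refine Integrable.mono' ((hφ₂.norm.mul_const (M * I₁)).restrict)
        (hφ₂.1.restrict.mul hFm) ?_
      filter_upwards [hTae] with x hx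
      rw [norm_mul]
      exact mul_le_mul_of_nonneg_left (hFnorm x hx) (norm_nonneg _)
    have houter : (∫ x in Q.set, ∫ y in P.set, K x y * φ₁ y * φ₂ x)
        = ∫ x in Q.set, φ₂ x * F x := by
      rw [integral_congr_ae hinner,
        integral_add h2int ((hφ₂.const_mul c₀).restrict),
        integral_const_mul c₀]
      rw [setIntegral_eq_integral_of_forall_compl_eq_zero (fun x hx => hsupp₂ x hx), hmean,
        mul_zero, add_zero]
    rw [houter]
    have hIQ : (∫ x in Q.set, ‖φ₂ x‖) = ∫ x, ‖φ₂ x‖ := by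
      apply setIntegral_eq_integral_of_forall_compl_eq_zero
      intro x hx; rw [hsupp₂ x hx, norm_zero]
    calc ‖∫ x in Q.set, φ₂ x * F x‖ ≤ ∫ x in Q.set, ‖φ₂ x * F x‖ :=
        norm_integral_le_integral_norm _
    _ ≤ ∫ x in Q.set, ‖φ₂ x‖ * (M * I₁) := by
        apply integral_mono_ae h2int.norm ((hφ₂.norm.mul_const (M * I₁)).restrict)
        filter_upwards [hTae] with x hx
        rw [norm_mul]
        exact mul_le_mul_of_nonneg_left (hFnorm x hx) (norm_nonneg _)
    _ = (∫ x in Q.set, ‖φ₂ x‖) * (M * I₁) := integral_mul_const _ _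
    _ = 1 * Q.l ^ η * D ^ (-((n : ℝ) + η)) * I₁ * (∫ x, ‖φ₂ x‖) := by
        rw [hIQ, hMdef]; ring
  · -- non-integrable case: the inner integral vanishes a.e.
    have hzero : ∀ᵐ x ∂(volume.restrict Q.set),
        (∫ y in P.set, K x y * φ₁ y * φ₂ x) = 0 := by
      filter_upwards [hTae] with x hx
      by_cases h0 : φ₂ x = 0
      · simp [h0]
      · apply integral_undef
        intro hcon
        apply hint
        have h1 : Integrable (fun y => K x y * φ₁ y) (volume.restrict P.set) := by
          have h2 := hcon.mul_const (φ₂ x)⁻¹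
          refine h2.congr (ae_of_all _ fun y => ?_)
          field_simp
        have h3 := h1.sub (hΔint x hx)
        refine h3.congr (ae_of_all _ fun y => ?_)
        simp only [Pi.sub_apply]
        ring
    rw [integral_congr_ae hzero, integral_zero, norm_zero]
    have h2 : 0 ≤ ∫ x, ‖φ₂ x‖ := integral_nonneg fun x => norm_nonneg _
    have : (0:ℝ) ≤ 1 * Q.l ^ η * D ^ (-((n : ℝ) + η)) * I₁ * (∫ x, ‖φ₂ x‖) := by
      apply mul_nonneg _ h2
      apply mul_nonneg _ hI₁0
      rw [one_mul]
      exact mul_nonneg (Real.rpow_nonneg hQl.le _) (Real.rpow_nonneg hD.le _)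
    exact this

end
end
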